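/- Let H = [[A, B], [C, D]] be an (M+N)×(M+N) block matrix with A ∈ ℝ^{M×M}, D ∈ ℝ^{N×N} invertible. Fix indices 1 ≤ m, m' ≤ M. Let Sub_{m,m'}H denote the matrix obtained from H by deleting row m and column m' (both indices lying in the first M rows/columns). Then det(Sub_{m,m'}H) = det D · det(Sub_{m,m'}(A − B D⁻¹ C)), where Sub_{m,m'} of the Schur complement deletes its m-th row and m'-th column. -/

import Mathlib

open Matrix

namespace Matrix

variable {l m n o l' m' l'' m'' α : Type*}

theorem fromBlocks_submatrix_sumMap (A : Matrix n l α) (B : Matrix n m α) (C : Matrix o l α)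
    (D : Matrix o m α) (f : l' → n) (g : m' → o) (f' : l'' → l) (g' : m'' → m) :
    (fromBlocks A B C D).submatrix (Sum.map f g) (Sum.map f' g') =
      fromBlocks (A.submatrix f f') (B.submatrix f g') (C.submatrix g f') (D.submatrix g g') := by
  ext (i | i) (j | j) <;> rfl

theorem submatrix_schurComplement [Fintype n] [Ring α] (A : Matrix m m α) (B : Matrix m n α)
    (C : Matrix n m α) (E : Matrix n n α) (f f' : l → m) :
    (A - B * E * C).submatrix f f' = A.submatrix f f' - B.submatrix f id * E * C.submatrix id f' := by
  ext i j
  simp [mul_apply, sub_apply]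

theorem det_fromBlocks_submatrix_sumMap_id [Fintype l] [DecidableEq l] [Fintype n] [DecidableEq n]
    [CommRing α] (A : Matrix m m α) (B : Matrix m n α) (C : Matrix n m α) (D : Matrix n n α)
    [Invertible D] (f f' : l → m) :
    ((fromBlocks A B C D).submatrix (Sum.map f id) (Sum.map f' id)).det =
      D.det * ((A - B * ⅟D * C).submatrix f f').det := by
  rw [fromBlocks_submatrix_sumMap, submatrix_id_id, det_fromBlocks₂₂, submatrix_schurComplement]

end Matrix

theorem stmt5 {M N : ℕ} (A : Matrix (Fin (M+1)) (Fin (M+1)) ℝ)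
    (B : Matrix (Fin (M+1)) (Fin N) ℝ) (C : Matrix (Fin N) (Fin (M+1)) ℝ)
    (D : Matrix (Fin N) (Fin N) ℝ)
    (hD : IsUnit D.det) (m m' : Fin (M+1)) :
    ((Matrix.fromBlocks A B C D).submatrix
        (Sum.map m.succAbove (id : Fin N → Fin N))
        (Sum.map m'.succAbove (id : Fin N → Fin N))).det
      = D.det * ((A - B * D⁻¹ * C).submatrix m.succAbove m'.succAbove).det := by
  let := D.invertibleOfIsUnitDet hD
  rw [← invOf_eq_nonsing_inv, det_fromBlocks_submatrix_sumMap_id]
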